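/- Let k be a commutative ring and n ≥ 0. The maps h_j satisfy the simplicial-homotopy identities with respect to the degeneracy maps: (a) s_i ∘ h_j = h_{j+1} ∘ s_i : Δ_n[t] → Δ_{n+2}[t] for 0 ≤ i ≤ j ≤ n; (b) s_i ∘ h_j = h_j ∘ s_{i−1} : Δ_n[t] → Δ_{n+2}[t] for 0 ≤ j < i ≤ n+1, where on the right-hand side h_j denotes the corresponding homotopy map Δ_{n+1}[t] → Δ_{n+2}[t]. -/
import Mathlib


open MvPolynomial

/-- `SimplexAlg k n` is the `k`-algebra `Δ_n = k[t_0,…,t_n]/(t_0+⋯+t_n − 1)`. -/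
noncomputable abbrev SimplexAlg (k : Type*) [CommRing k] (n : ℕ) : Type _ :=
  MvPolynomial (Fin (n + 1)) k ⧸
    Ideal.span {(∑ i, X i : MvPolynomial (Fin (n + 1)) k) - 1}

/-- The image of the variable `t_i` in `Δ_n`. -/
noncomputable def tv (k : Type*) [CommRing k] (n : ℕ) (i : Fin (n + 1)) : SimplexAlg k n :=
  Ideal.Quotient.mk _ (X i)

/-- `IsFace k n r f` says that the `k`-algebra homomorphism `f : Δ_{n+1} → Δ_n` satisfies the
defining conditions of the face map `d_r`: `d_r(t_i) = t_i` for `i < r`, `d_r(t_r) = 0`, and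
`d_r(t_i) = t_{i-1}` for `i > r`. -/
def IsFace (k : Type*) [CommRing k] (n r : ℕ)
    (f : SimplexAlg k (n + 1) →ₐ[k] SimplexAlg k n) : Prop :=
  (∀ (i : Fin (n + 2)) (_ : (i : ℕ) < r) (h' : (i : ℕ) < n + 1),
      f (tv k (n + 1) i) = tv k n ⟨i, h'⟩) ∧
  (∀ i : Fin (n + 2), (i : ℕ) = r → f (tv k (n + 1) i) = 0) ∧
  (∀ (i : Fin (n + 2)) (_ : r < (i : ℕ)),
      f (tv k (n + 1) i) = tv k n ⟨(i : ℕ) - 1, by have := i.isLt; omega⟩)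

/-- `IsDegen k n r f` says that the `k`-algebra homomorphism `f : Δ_n → Δ_{n+1}` satisfies the
defining conditions of the degeneracy map `s_r`: `s_r(t_i) = t_i` for `i < r`,
`s_r(t_r) = t_r + t_{r+1}`, and `s_r(t_i) = t_{i+1}` for `i > r`. -/
def IsDegen (k : Type*) [CommRing k] (n r : ℕ)
    (f : SimplexAlg k n →ₐ[k] SimplexAlg k (n + 1)) : Prop :=
  (∀ (i : Fin (n + 1)) (_ : (i : ℕ) < r),
      f (tv k n i) = tv k (n + 1) ⟨i, by have := i.isLt; omega⟩) ∧
  (∀ i : Fin (n + 1), (i : ℕ) = r →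
      f (tv k n i) = tv k (n + 1) ⟨i, by have := i.isLt; omega⟩ +
        tv k (n + 1) ⟨(i : ℕ) + 1, by have := i.isLt; omega⟩) ∧
  (∀ (i : Fin (n + 1)) (_ : r < (i : ℕ)),
      f (tv k n i) = tv k (n + 1) ⟨(i : ℕ) + 1, by have := i.isLt; omega⟩)

/-- The element `t_{j+1} + ⋯ + t_{n+1}` of `Δ_{n+1}`. -/
noncomputable def tailSum (k : Type*) [CommRing k] (n j : ℕ) : SimplexAlg k (n + 1) :=
  ∑ i : Fin (n + 2), if j + 1 ≤ (i : ℕ) then tv k (n + 1) i else 0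

/-- `IsHtpy k n j s h` says that the `k`-algebra homomorphism `h : Δ_n[t] → Δ_{n+1}[t]`
sends `t` to `t·(t_{j+1}+⋯+t_{n+1})` and restricts on `Δ_n` to `s` (to be the degeneracy `s_j`). -/
def IsHtpy (k : Type*) [CommRing k] (n j : ℕ)
    (s : SimplexAlg k n →ₐ[k] SimplexAlg k (n + 1))
    (h : Polynomial (SimplexAlg k n) →ₐ[k] Polynomial (SimplexAlg k (n + 1))) : Prop :=
  h Polynomial.X = Polynomial.C (tailSum k n j) * Polynomial.X ∧
  ∀ a : SimplexAlg k n, h (Polynomial.C a) = Polynomial.C (s a)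

/-- `IsPolyExt f F` says that `F` is the coefficientwise extension of `f` to polynomial rings,
fixing the variable `t`. -/
def IsPolyExt {k B₁ B₂ : Type*} [CommRing k] [CommRing B₁] [CommRing B₂]
    [Algebra k B₁] [Algebra k B₂] (f : B₁ →ₐ[k] B₂)
    (F : Polynomial B₁ →ₐ[k] Polynomial B₂) : Prop :=
  F Polynomial.X = Polynomial.X ∧ ∀ b : B₁, F (Polynomial.C b) = Polynomial.C (f b)

section Aux
set_option synthInstance.maxHeartbeats 1000000
set_option maxHeartbeats 1000000

variable {k : Type*} [CommRing k]

lemma SimplexAlg.tv_ext {n : ℕ} {A : Type*} [CommRing A] [Algebra k A]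
    {f g : SimplexAlg k n →ₐ[k] A} (h : ∀ i, f (tv k n i) = g (tv k n i)) : f = g := by
  apply Ideal.Quotient.algHom_ext
  apply MvPolynomial.algHom_ext
  intro i
  simpa [tv] using h i

lemma polyAlgHom_ext {B₁ B₂ : Type*} [CommRing B₁] [CommRing B₂] [Algebra k B₁] [Algebra k B₂]
    {F G : Polynomial B₁ →ₐ[k] Polynomial B₂}
    (hX : F Polynomial.X = G Polynomial.X)
    (hC : ∀ b, F (Polynomial.C b) = G (Polynomial.C b)) : F = G := by
  apply Polynomial.algHom_ext' _ hX
  apply AlgHom.ext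
  intro b
  simpa using hC b

lemma sum_tv (n : ℕ) : (∑ i, tv k n i) = 1 := by
  have h0 : (Ideal.Quotient.mk (Ideal.span {(∑ i, X i : MvPolynomial (Fin (n + 1)) k) - 1})
      ((∑ i, X i : MvPolynomial (Fin (n + 1)) k) - 1)) = 0 := by
    rw [Ideal.Quotient.eq_zero_iff_mem]; exact Ideal.subset_span rfl
  rw [RingHom.map_sub, RingHom.map_one, sub_eq_zero, map_sum] at h0
  simpa [tv] using h0

lemma degen_comp_a_core (n i j : ℕ) (hij : i ≤ j) (hjn : j ≤ n)
    (sj : SimplexAlg k n →ₐ[k] SimplexAlg k (n+1)) (hsj : IsDegen k n j sj)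
    (si : SimplexAlg k (n+1) →ₐ[k] SimplexAlg k (n+2)) (hsi : IsDegen k (n+1) i si)
    (si' : SimplexAlg k n →ₐ[k] SimplexAlg k (n+1)) (hsi' : IsDegen k n i si')
    (sj1 : SimplexAlg k (n+1) →ₐ[k] SimplexAlg k (n+2)) (hsj1 : IsDegen k (n+1) (j+1) sj1) :
    ∀ m : Fin (n+1), si (sj (tv k n m)) = sj1 (si' (tv k n m)) := by
  obtain ⟨sjl, sje, sjg⟩ := hsj
  obtain ⟨sil, sie, sig⟩ := hsi
  obtain ⟨sil', sie', sig'⟩ := hsi'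
  obtain ⟨sj1l, sj1e, sj1g⟩ := hsj1
  intro m
  have hm := m.isLt
  rcases lt_trichotomy (m : ℕ) i with h1 | h1 | h1
  · -- m < i ≤ j
    rw [sjl m (by (try simp only [Fin.val_mk, Fin.val_succ]); omega), sil _ (by exact h1), sil' m h1, sj1l _ (by (try simp only [Fin.val_mk, Fin.val_succ]); omega)]
  · -- m = i
    rcases lt_or_eq_of_le hij with hij' | rfl
    · -- i < j
      rw [sjl m (by (try simp only [Fin.val_mk, Fin.val_succ]); omega), sie _ (by exact h1), sie' m h1, map_add,
        sj1l _ (by (try simp only [Fin.val_mk, Fin.val_succ]); omega), sj1l _ (by (try simp only [Fin.val_mk, Fin.val_succ]); omega)]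
    · -- i = j
      rw [sje m h1, map_add, sie _ (by exact h1), sig _ (by (try simp only [Fin.val_mk, Fin.val_succ]); omega),
        sie' m h1, map_add, sj1l _ (by (try simp only [Fin.val_mk, Fin.val_succ]); omega), sj1e _ (by (try simp only [Fin.val_mk, Fin.val_succ]); omega)]
      ring
  · rcases lt_trichotomy (m : ℕ) j with h2 | h2 | h2
    · -- i < m < j
      rw [sjl m h2, sig _ (by exact h1), sig' m h1, sj1l _ (by (try simp only [Fin.val_mk, Fin.val_succ]); omega)]
    · -- i < m = j
      rw [sje m h2, map_add, sig _ (by exact h1), sig _ (by (try simp only [Fin.val_mk, Fin.val_succ]); omega),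
        sig' m h1, sj1e _ (by (try simp only [Fin.val_mk, Fin.val_succ]); omega)]
    · -- j < m
      rw [sjg m h2, sig _ (by (try simp only [Fin.val_mk, Fin.val_succ]); omega), sig' m h1, sj1g _ (by (try simp only [Fin.val_mk, Fin.val_succ]); omega)]

lemma degen_comp_b_core (n i j : ℕ) (hji : j < i) (hin : i ≤ n + 1)
    (sj : SimplexAlg k n →ₐ[k] SimplexAlg k (n+1)) (hsj : IsDegen k n j sj)
    (si : SimplexAlg k (n+1) →ₐ[k] SimplexAlg k (n+2)) (hsi : IsDegen k (n+1) i si)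
    (si1 : SimplexAlg k n →ₐ[k] SimplexAlg k (n+1)) (hsi1 : IsDegen k n (i-1) si1)
    (sj' : SimplexAlg k (n+1) →ₐ[k] SimplexAlg k (n+2)) (hsj' : IsDegen k (n+1) j sj') :
    ∀ m : Fin (n+1), si (sj (tv k n m)) = sj' (si1 (tv k n m)) := by
  obtain ⟨sjl, sje, sjg⟩ := hsj
  obtain ⟨sil, sie, sig⟩ := hsi
  obtain ⟨sil1, sie1, sig1⟩ := hsi1
  obtain ⟨sjl', sje', sjg'⟩ := hsj'
  intro m
  have hm := m.isLt
  rcases lt_trichotomy (m : ℕ) j with h1 | h1 | h1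
  · -- m < j < i
    rw [sjl m h1, sil _ (by (try simp only [Fin.val_mk, Fin.val_succ]); omega), sil1 m (by (try simp only [Fin.val_mk, Fin.val_succ]); omega), sjl' _ (by (try simp only [Fin.val_mk, Fin.val_succ]); omega)]
  · -- m = j
    rcases lt_or_eq_of_le (Nat.succ_le_of_lt hji) with h2 | h2
    · -- m + 1 < i
      rw [sje m h1, map_add, sil _ (by (try simp only [Fin.val_mk, Fin.val_succ]); omega), sil _ (by (try simp only [Fin.val_mk, Fin.val_succ]); omega),
        sil1 m (by (try simp only [Fin.val_mk, Fin.val_succ]); omega), sje' _ (by exact h1)]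
    · -- m + 1 = i
      rw [sje m h1, map_add, sil _ (by (try simp only [Fin.val_mk, Fin.val_succ]); omega), sie _ (by (try simp only [Fin.val_mk, Fin.val_succ]); omega),
        sie1 m (by (try simp only [Fin.val_mk, Fin.val_succ]); omega), map_add, sje' _ (by exact h1), sjg' _ (by (try simp only [Fin.val_mk, Fin.val_succ]); omega)]
      ring
  · -- j < m
    rcases lt_trichotomy ((m : ℕ) + 1) i with h2 | h2 | h2
    · rw [sjg m h1, sil _ (by (try simp only [Fin.val_mk, Fin.val_succ]); omega), sil1 m (by (try simp only [Fin.val_mk, Fin.val_succ]); omega), sjg' _ (by (try simp only [Fin.val_mk, Fin.val_succ]); omega)]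
    · rw [sjg m h1, sie _ (by (try simp only [Fin.val_mk, Fin.val_succ]); omega), sie1 m (by (try simp only [Fin.val_mk, Fin.val_succ]); omega), map_add,
        sjg' _ (by (try simp only [Fin.val_mk, Fin.val_succ]); omega), sjg' _ (by (try simp only [Fin.val_mk, Fin.val_succ]); omega)]
    · rw [sjg m h1, sig _ (by (try simp only [Fin.val_mk, Fin.val_succ]); omega), sig1 m (by (try simp only [Fin.val_mk, Fin.val_succ]); omega), sjg' _ (by (try simp only [Fin.val_mk, Fin.val_succ]); omega)]

lemma degen_tailSum_a (n i j : ℕ) (hij : i ≤ j) (hjn : j ≤ n)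
    (si : SimplexAlg k (n+1) →ₐ[k] SimplexAlg k (n+2)) (hsi : IsDegen k (n+1) i si) :
    si (tailSum k n j) = tailSum k (n+1) (j+1) := by
  obtain ⟨sil, sie, sig⟩ := hsi
  have hrhs : tailSum k (n+1) (j+1)
      = ∑ m : Fin (n+2), if j + 1 ≤ (m : ℕ) then tv k (n+2) m.succ else 0 := by
    rw [tailSum, Fin.sum_univ_succ, if_neg (by simp), zero_add]
    apply Finset.sum_congr rfl
    intro m _
    by_cases h : j + 1 ≤ (m : ℕ)
    · rw [if_pos h, if_pos (by simp only [Fin.val_succ]; omega)]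
    · rw [if_neg h, if_neg (by simp only [Fin.val_succ]; omega)]
  rw [tailSum, map_sum, hrhs]
  apply Finset.sum_congr rfl
  intro m _
  by_cases h : j + 1 ≤ (m : ℕ)
  · rw [if_pos h, if_pos h, sig m (by omega)]
    rfl
  · rw [if_neg h, if_neg h, map_zero]

lemma tailSum_eq (n j : ℕ) :
    tailSum k n j = 1 - ∑ m : Fin (n+2), if (m : ℕ) ≤ j then tv k (n+1) m else 0 := by
  rw [eq_sub_iff_add_eq, tailSum, ← Finset.sum_add_distrib, ← sum_tv (k := k) (n+1)]
  apply Finset.sum_congr rfl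
  intro m _
  rcases le_or_gt (m : ℕ) j with h | h
  · rw [if_neg (by (try simp only [Fin.val_mk, Fin.val_succ]); omega), if_pos h, zero_add]
  · rw [if_pos (by (try simp only [Fin.val_mk, Fin.val_succ]); omega), if_neg (by (try simp only [Fin.val_mk, Fin.val_succ]); omega), add_zero]

lemma degen_tailSum_b (n i j : ℕ) (hji : j < i) (hin : i ≤ n + 1)
    (si : SimplexAlg k (n+1) →ₐ[k] SimplexAlg k (n+2)) (hsi : IsDegen k (n+1) i si) :
    si (tailSum k n j) = tailSum k (n+1) j := by
  obtain ⟨sil, sie, sig⟩ := hsi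
  have hrhs : (∑ m : Fin (n+3), if (m : ℕ) ≤ j then tv k (n+2) m else 0)
      = ∑ m : Fin (n+2), if (m : ℕ) ≤ j then tv k (n+2) m.castSucc else 0 := by
    rw [Fin.sum_univ_castSucc, if_neg (by simp only [Fin.val_last]; omega), add_zero]
    apply Finset.sum_congr rfl
    intro m _
    by_cases h : (m : ℕ) ≤ j
    · rw [if_pos h, if_pos (by simp only [Fin.coe_castSucc]; omega)]
    · rw [if_neg h, if_neg (by simp only [Fin.coe_castSucc]; omega)]
  rw [tailSum_eq, map_sub, map_one, map_sum, tailSum_eq, hrhs]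
  congr 1
  apply Finset.sum_congr rfl
  intro m _
  by_cases h : (m : ℕ) ≤ j
  · rw [if_pos h, if_pos h, sil m (by omega)]
    rfl
  · rw [if_neg h, if_neg h, map_zero]

end Aux
/-- the simplicial-homotopy identities of the maps `h_j` with respect to the
degeneracy maps (all degeneracy maps extended coefficientwise to the polynomial rings,
fixing `t`):
(a) `s_i ∘ h_j = h_{j+1} ∘ s_i : Δ_n[t] → Δ_{n+2}[t]` for `0 ≤ i ≤ j ≤ n`;
(b) `s_i ∘ h_j = h_j ∘ s_{i-1} : Δ_n[t] → Δ_{n+2}[t]` for `0 ≤ j < i ≤ n+1`, where on the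
right-hand side `h_j` denotes the corresponding homotopy map `Δ_{n+1}[t] → Δ_{n+2}[t]`. -/
theorem degen_comp_htpy (k : Type*) [CommRing k] :
    (∀ (n i j : ℕ), i ≤ j → j ≤ n →
      ∀ (sj : SimplexAlg k n →ₐ[k] SimplexAlg k (n + 1)), IsDegen k n j sj →
      ∀ (hj : Polynomial (SimplexAlg k n) →ₐ[k] Polynomial (SimplexAlg k (n + 1))),
        IsHtpy k n j sj hj →
      ∀ (si : SimplexAlg k (n + 1) →ₐ[k] SimplexAlg k (n + 2)), IsDegen k (n + 1) i si →
      ∀ (Si : Polynomial (SimplexAlg k (n + 1)) →ₐ[k] Polynomial (SimplexAlg k (n + 2))),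
        IsPolyExt si Si →
      ∀ (si' : SimplexAlg k n →ₐ[k] SimplexAlg k (n + 1)), IsDegen k n i si' →
      ∀ (Si' : Polynomial (SimplexAlg k n) →ₐ[k] Polynomial (SimplexAlg k (n + 1))),
        IsPolyExt si' Si' →
      ∀ (sj1 : SimplexAlg k (n + 1) →ₐ[k] SimplexAlg k (n + 2)), IsDegen k (n + 1) (j + 1) sj1 →
      ∀ (hj1 : Polynomial (SimplexAlg k (n + 1)) →ₐ[k] Polynomial (SimplexAlg k (n + 2))),
        IsHtpy k (n + 1) (j + 1) sj1 hj1 →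
        Si.comp hj = hj1.comp Si') ∧
    (∀ (n i j : ℕ), j < i → i ≤ n + 1 →
      ∀ (sj : SimplexAlg k n →ₐ[k] SimplexAlg k (n + 1)), IsDegen k n j sj →
      ∀ (hj : Polynomial (SimplexAlg k n) →ₐ[k] Polynomial (SimplexAlg k (n + 1))),
        IsHtpy k n j sj hj →
      ∀ (si : SimplexAlg k (n + 1) →ₐ[k] SimplexAlg k (n + 2)), IsDegen k (n + 1) i si →
      ∀ (Si : Polynomial (SimplexAlg k (n + 1)) →ₐ[k] Polynomial (SimplexAlg k (n + 2))),
        IsPolyExt si Si →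
      ∀ (si1 : SimplexAlg k n →ₐ[k] SimplexAlg k (n + 1)), IsDegen k n (i - 1) si1 →
      ∀ (Si1 : Polynomial (SimplexAlg k n) →ₐ[k] Polynomial (SimplexAlg k (n + 1))),
        IsPolyExt si1 Si1 →
      ∀ (sj' : SimplexAlg k (n + 1) →ₐ[k] SimplexAlg k (n + 2)), IsDegen k (n + 1) j sj' →
      ∀ (hj' : Polynomial (SimplexAlg k (n + 1)) →ₐ[k] Polynomial (SimplexAlg k (n + 2))),
        IsHtpy k (n + 1) j sj' hj' →
        Si.comp hj = hj'.comp Si1) := by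
  constructor
  · intro n i j hij hjn sj hsj hj hhj si hsi Si hSi si' hsi' Si' hSi' sj1 hsj1 hj1 hhj1
    obtain ⟨hjX, hjC⟩ := hhj
    obtain ⟨SiX, SiC⟩ := hSi
    obtain ⟨Si'X, Si'C⟩ := hSi'
    obtain ⟨hj1X, hj1C⟩ := hhj1
    have hcomp : si.comp sj = sj1.comp si' :=
      SimplexAlg.tv_ext (fun m => by
        simpa [AlgHom.comp_apply] using
          degen_comp_a_core n i j hij hjn sj hsj si hsi si' hsi' sj1 hsj1 m)
    apply polyAlgHom_ext
    · rw [AlgHom.comp_apply, AlgHom.comp_apply, hjX, Si'X, hj1X, map_mul, SiC, SiX,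
        degen_tailSum_a n i j hij hjn si hsi]
    · intro b
      rw [AlgHom.comp_apply, AlgHom.comp_apply, hjC, SiC, Si'C, hj1C]
      exact congrArg Polynomial.C (AlgHom.congr_fun hcomp b)
  · intro n i j hji hin sj hsj hj hhj si hsi Si hSi si1 hsi1 Si1 hSi1 sj' hsj' hj' hhj'
    obtain ⟨hjX, hjC⟩ := hhj
    obtain ⟨SiX, SiC⟩ := hSi
    obtain ⟨Si1X, Si1C⟩ := hSi1
    obtain ⟨hj'X, hj'C⟩ := hhj'
    have hcomp : si.comp sj = sj'.comp si1 :=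
      SimplexAlg.tv_ext (fun m => by
        simpa [AlgHom.comp_apply] using
          degen_comp_b_core n i j hji hin sj hsj si hsi si1 hsi1 sj' hsj' m)
    apply polyAlgHom_ext
    · rw [AlgHom.comp_apply, AlgHom.comp_apply, hjX, Si1X, hj'X, map_mul, SiC, SiX,
        degen_tailSum_b n i j hji hin si hsi]
    · intro b
      rw [AlgHom.comp_apply, AlgHom.comp_apply, hjC, SiC, Si1C, hj'C]
      exact congrArg Polynomial.C (AlgHom.congr_fun hcomp b)
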